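/- For every integer n ≥ 2, the chromatic number of the total Kneser graph satisfies χ(KG(n)) ≥ n·H_{⌊(n−1)/2⌋} + (1 − p(n)), where the chromatic number is interpreted as a real number on the left-hand side. -/

import Mathlib

/-- A partition of `{0,…,n-1}` (modeled as `Fin n`) into an unordered pair of nonempty
disjoint subsets covering everything, modeled as a 2-element finset of parts. -/
def TKPart (n : ℕ) (P : Finset (Finset (Fin n))) : Prop :=
  P.card = 2 ∧ (∀ A ∈ P, A.Nonempty) ∧
    (∀ A ∈ P, ∀ B ∈ P, A ≠ B → Disjoint A B) ∧ P.sup id = Finset.univ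

/-- Vertices of the total Kneser graph. -/
abbrev TKVert (n : ℕ) := {P : Finset (Finset (Fin n)) // TKPart n P}

/-- The total Kneser graph `KG(n)`: two distinct partitions are adjacent iff they are
nested, i.e. some part of one is contained in some part of the other. -/
def KG (n : ℕ) : SimpleGraph (TKVert n) where
  Adj P Q := P ≠ Q ∧
    ((∃ A ∈ P.1, ∃ C ∈ Q.1, A ⊆ C) ∨ (∃ C ∈ Q.1, ∃ A ∈ P.1, C ⊆ A))
  symm := by
    refine ⟨?_⟩
    rintro P Q ⟨hne, h⟩
    refine ⟨hne.symm, ?_⟩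
    rcases h with ⟨A, hA, C, hC, hAC⟩ | ⟨C, hC, A, hA, hCA⟩
    · exact Or.inr ⟨A, hA, C, hC, hAC⟩
    · exact Or.inl ⟨C, hC, A, hA, hCA⟩
  loopless := ⟨fun P h => h.1 rfl⟩

/-!
Place `0, 1, …, n-1` on a circle. Every cyclic interval (arc) `A` with `1 ≤ |A| ≤ n/2` gives the
vertex `{A, Aᶜ}` of `KG(n)`, and two such vertices are non-adjacent exactly when their arcs are
non-nested and intersecting. By Katona's circle argument such a family of arcs satisfies
`∑ 1/|A| ≤ 1`: if `A₀` is a shortest member, each member has an end point inside `A₀`, and distinct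
members have disjoint sets of end points, so there are at most `|A₀|` members. Hence every colour
class carries weight at most `1`, while the total weight of all arcs is `n H_{⌊(n-1)/2⌋}`, plus `1`
when `n` is even (from the `n/2` partitions into two arcs of length `n/2`, each of weight
`2/n`).
-/

open Finset Fin.NatCast

lemma Fin.val_sub_eq_ite {n : ℕ} (a b : Fin n) :
    ((a - b : Fin n) : ℕ) = if b ≤ a then (a : ℕ) - b else n + a - b := by
  split_ifs with h
  · exact Fin.sub_val_of_le h
  · exact Fin.coe_sub_iff_lt.mpr (not_le.mp h)

lemma Fin.val_sub_add_val_sub {n : ℕ} {a b : Fin n} (h : a ≠ b) :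
    ((a - b : Fin n) : ℕ) + (b - a : Fin n) = n := by
  have := Fin.val_ne_of_ne h
  simp only [Fin.val_sub_eq_ite, Fin.le_iff_val_le_val]
  split_ifs <;> omega

theorem SimpleGraph.Coloring.sum_le_card {V ι α R : Type*} [Fintype ι] [Fintype α]
    [AddCommMonoidWithOne R] [PartialOrder R] [IsOrderedAddMonoid R] {G : SimpleGraph V}
    (C : G.Coloring α) (f : ι → V) (w : ι → R)
    (hw : ∀ t : Finset ι, (∀ x ∈ t, ∀ y ∈ t, ¬ G.Adj (f x) (f y)) → ∑ x ∈ t, w x ≤ 1) :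
    ∑ x, w x ≤ Fintype.card α := by
  classical
  calc ∑ x, w x = ∑ c, ∑ x with C (f x) = c, w x := (sum_fiberwise _ _ _).symm
    _ ≤ ∑ _c : α, (1 : R) := sum_le_sum fun c _ => hw _ fun x hx y hy hadj =>
        C.valid hadj ((mem_filter.mp hx).2.trans (mem_filter.mp hy).2.symm)
    _ = Fintype.card α := by simp

section CyclicArc
variable {n : ℕ}

def arc (j : Fin n) (k : ℕ) : Finset (Fin n) := {x | ((x - j : Fin n) : ℕ) < k}

lemma mem_arc {j x : Fin n} {k : ℕ} : x ∈ arc j k ↔ ((x - j : Fin n) : ℕ) < k := by simp [arc]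

lemma arc_mono (j : Fin n) {k l : ℕ} (h : k ≤ l) : arc j k ⊆ arc j l := fun x hx => by
  rw [mem_arc] at *; omega

variable [NeZero n]

lemma self_mem_arc (j : Fin n) {k : ℕ} (hk : 0 < k) : j ∈ arc j k := by simpa [mem_arc]

lemma card_arc (j : Fin n) {k : ℕ} (hk : k ≤ n) : #(arc j k) = k := by
  have : arc j k = ({x | (x : ℕ) < k} : Finset (Fin n)).map (Equiv.addLeft j).toEmbedding := by
    ext x; simp [mem_arc, Equiv.addLeft, sub_eq_neg_add]
  rw [this, card_map, Fin.card_filter_val_lt, min_eq_right hk]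

lemma mem_arc_iff_end {s x : Fin n} {l : ℕ} (hl : l < n) :
    x ∈ arc s l ↔ 0 < ((s + l - x : Fin n) : ℕ) ∧ ((s + l - x : Fin n) : ℕ) ≤ l := by
  rw [mem_arc, show s + l - x = (l : Fin n) - (x - s) by abel]
  generalize x - s = y
  simp only [Fin.val_sub_eq_ite, Fin.le_iff_val_le_val, Fin.val_cast_of_lt hl]
  split_ifs <;> omega

lemma arc_subset_arc_of_add_eq {s s' : Fin n} {l l' : ℕ} (hl : l ≤ l') (hl' : l' < n)
    (h : s + l = s' + l') : arc s l ⊆ arc s' l' := fun x hx => by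
  rw [mem_arc_iff_end (hl.trans_lt hl'), h] at hx
  rw [mem_arc_iff_end hl']
  omega

lemma disjoint_arc_arc_add {s : Fin n} {l l' : ℕ} (h : l + l' ≤ n) (hl : l < n) :
    Disjoint (arc s l) (arc (s + l) l') := by
  rw [disjoint_left]
  intro x hx hx'
  rw [mem_arc] at hx hx'
  rw [show x - (s + l) = (x - s) - l by abel] at hx'
  generalize x - s = y at hx hx'
  simp only [Fin.val_sub_eq_ite, Fin.le_iff_val_le_val, Fin.val_cast_of_lt hl] at hx'
  split_ifs at hx' <;> omega

lemma mem_arc_or_add_mem_arc_of_not_subset {j s : Fin n} {a l : ℕ} (hl : l < n)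
    (hmeet : ¬ Disjoint (arc j a) (arc s l)) (hns : ¬ arc j a ⊆ arc s l) :
    s ∈ arc j a ∨ s + l ∈ arc j a := by
  by_contra! ⟨hs, he⟩
  obtain ⟨z, hzj, hzs⟩ := not_disjoint_iff.mp hmeet
  refine hns fun w hw => ?_
  rw [mem_arc] at hs he hzj hzs hw ⊢
  rw [show s + l - j = (s - j) + l by abel] at he
  rw [show z - s = (z - j) - (s - j) by abel] at hzs
  rw [show w - s = (w - j) - (s - j) by abel]
  generalize s - j = u at *
  generalize z - j = t at *
  generalize w - j = v at *
  simp only [Fin.val_sub_eq_ite, Fin.val_add_eq_ite, Fin.le_iff_val_le_val,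
    Fin.val_cast_of_lt hl] at *
  split_ifs at * <;> omega

lemma arc_eq_arc {j s : Fin n} {k l : ℕ} (hk : 0 < k) (hkn : 2 * k ≤ n) (hln : 2 * l ≤ n)
    (h : arc j k = arc s l) : k = l ∧ j = s := by
  have hkl : k = l := by
    rw [← card_arc j (by omega : k ≤ n), h, card_arc s (by omega)]
  subst hkl
  refine ⟨rfl, by_contra fun hjs => ?_⟩
  have hj := mem_arc.mp (h ▸ self_mem_arc j hk)
  have hs := mem_arc.mp (h.symm ▸ self_mem_arc s hk)
  have := Fin.val_sub_add_val_sub hjs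
  omega

end CyclicArc

section Katona
variable {n : ℕ} [NeZero n]

/-- A pair `x = (k, j)` stands for the arc `arc j k`; its ends are its first point `j` and the
point `j + k` just past it. -/
def arcEnds (x : ℕ × Fin n) : Finset (Fin n) := {x.2, x.2 + x.1}

def IsIntersectingArcAntichain (F : Finset (ℕ × Fin n)) : Prop :=
  ∀ x ∈ F, ∀ y ∈ F, x ≠ y → ¬ arc x.2 x.1 ⊆ arc y.2 y.1 ∧ ¬ Disjoint (arc x.2 x.1) (arc y.2 y.1)

lemma disjoint_arcEnds {x y : ℕ × Fin n} (hx : 2 * x.1 ≤ n) (hy : 2 * y.1 ≤ n)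
    (hxy : ¬ arc x.2 x.1 ⊆ arc y.2 y.1) (hyx : ¬ arc y.2 y.1 ⊆ arc x.2 x.1)
    (hmeet : ¬ Disjoint (arc x.2 x.1) (arc y.2 y.1)) : Disjoint (arcEnds x) (arcEnds y) := by
  have hn := NeZero.pos n
  obtain ⟨lx, sx⟩ := x
  obtain ⟨ly, sy⟩ := y
  dsimp only at *
  simp only [arcEnds, disjoint_insert_left, disjoint_insert_right, disjoint_singleton, mem_insert,
    mem_singleton, not_or]
  refine ⟨⟨?_, ?_⟩, ?_, ?_⟩
  · rintro rfl
    rcases le_total lx ly with h | h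
    exacts [hxy (arc_mono _ h), hyx (arc_mono _ h)]
  · rintro rfl
    exact hmeet (disjoint_arc_arc_add (by omega) (by omega))
  · rintro rfl
    exact hmeet (disjoint_arc_arc_add (by omega) (by omega)).symm
  · intro h
    rcases le_total lx ly with hl | hl
    exacts [hxy (arc_subset_arc_of_add_eq hl (by omega) h),
      hyx (arc_subset_arc_of_add_eq hl (by omega) h.symm)]

namespace IsIntersectingArcAntichain
variable {F : Finset (ℕ × Fin n)} (hF : IsIntersectingArcAntichain F)
  (hlen : ∀ x ∈ F, 0 < x.1 ∧ 2 * x.1 ≤ n)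
include hF hlen

lemma card_le {x₀ : ℕ × Fin n} (hx₀ : x₀ ∈ F) : #F ≤ x₀.1 := by
  classical
  have hn := NeZero.pos n
  calc #F ≤ #(F.biUnion fun x => arcEnds x ∩ arc x₀.2 x₀.1) := by
        refine card_le_card_biUnion (fun x hx y hy hxy => ?_) (fun x hx => ?_)
        · exact (disjoint_arcEnds (hlen x hx).2 (hlen y hy).2 (hF x hx y hy hxy).1
            (hF y hy x hx (Ne.symm hxy)).1 (hF x hx y hy hxy).2).mono inter_subset_left
            inter_subset_left
        · by_cases h : x = x₀
          · subst h
            exact ⟨x.2, by simp [arcEnds, self_mem_arc _ (hlen x hx).1]⟩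
          · obtain ⟨hns, hmeet⟩ := hF x₀ hx₀ x hx (Ne.symm h)
            rcases mem_arc_or_add_mem_arc_of_not_subset (by have := (hlen x hx).2; omega) hmeet hns
              with hs | he
            exacts [⟨x.2, by simp [arcEnds, hs]⟩, ⟨x.2 + x.1, by simp [arcEnds, he]⟩]
    _ ≤ #(arc x₀.2 x₀.1) := card_le_card (biUnion_subset.mpr fun _ _ => inter_subset_right)
    _ = x₀.1 := card_arc _ (by have := (hlen x₀ hx₀).2; omega)

theorem sum_inv_le_one : ∑ x ∈ F, (x.1 : ℚ)⁻¹ ≤ 1 := by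
  rcases F.eq_empty_or_nonempty with rfl | hne
  · simp
  obtain ⟨x₀, hx₀, hmin⟩ := F.exists_min_image Prod.fst hne
  have ha : (0 : ℚ) < x₀.1 := by exact_mod_cast (hlen x₀ hx₀).1
  calc ∑ x ∈ F, (x.1 : ℚ)⁻¹ ≤ ∑ _x ∈ F, (x₀.1 : ℚ)⁻¹ :=
        sum_le_sum fun x hx => inv_anti₀ ha (by exact_mod_cast hmin x hx)
    _ = #F * (x₀.1 : ℚ)⁻¹ := by rw [sum_const, nsmul_eq_mul]
    _ ≤ x₀.1 * (x₀.1 : ℚ)⁻¹ := by gcongr; exact_mod_cast hF.card_le hlen hx₀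
    _ = 1 := mul_inv_cancel₀ ha.ne'

end IsIntersectingArcAntichain

end Katona

section TotalKneser
variable {n : ℕ} [NeZero n]

lemma tkPart_pair_compl {A : Finset (Fin n)} (hA : A.Nonempty) (hA' : Aᶜ.Nonempty) :
    TKPart n {A, Aᶜ} := by
  have hne : A ≠ Aᶜ := fun h => by
    obtain ⟨a, ha⟩ := hA
    exact (mem_compl.mp (h ▸ ha)) ha
  refine ⟨card_pair hne, by simp [hA, hA'], ?_, by simp⟩
  simp [disjoint_compl_right, disjoint_compl_left]

/-- The arcs `arc j k` with `1 ≤ k ≤ n / 2`; when `k = n / 2` the complement of an arc is again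
an arc, so only the starts `j < k` are kept, one arc for each partition. -/
def arcIndex (n : ℕ) : Finset (ℕ × Fin n) :=
  {x ∈ Icc 1 (n / 2) ×ˢ univ | 2 * x.1 = n → (x.2 : ℕ) < x.1}

omit [NeZero n] in
lemma mem_arcIndex {x : ℕ × Fin n} :
    x ∈ arcIndex n ↔ 0 < x.1 ∧ 2 * x.1 ≤ n ∧ (2 * x.1 = n → (x.2 : ℕ) < x.1) := by
  simp only [arcIndex, mem_filter, mem_product, mem_Icc, mem_univ, and_true]
  omega

lemma sum_arcIndex :
    ∑ x ∈ arcIndex n, (x.1 : ℚ)⁻¹ = n * harmonic ((n - 1) / 2) + (1 - ((n % 2 : ℕ) : ℚ)) := by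
  have hfiber : ∀ k ∈ Icc 1 (n / 2), ∑ j : Fin n, (if 2 * k = n → (j : ℕ) < k then (k : ℚ)⁻¹ else 0)
      = if 2 * k = n then 1 else n * (k : ℚ)⁻¹ := by
    intro k hk
    have hk0 : (k : ℚ) ≠ 0 := by
      simp only [mem_Icc] at hk; exact_mod_cast (by omega : k ≠ 0)
    rw [← sum_filter, sum_const, nsmul_eq_mul]
    split_ifs with h
    · simp only [h, forall_const, Fin.card_filter_val_lt, min_eq_right (by omega : k ≤ n)]
      exact mul_inv_cancel₀ hk0
    · simp [h]
  have hsum : ∀ m, 2 * m < n → ∑ k ∈ Icc 1 m, (if 2 * k = n then 1 else n * (k : ℚ)⁻¹)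
      = n * harmonic m := by
    intro m hm
    rw [harmonic_eq_sum_Icc, mul_sum]
    exact sum_congr rfl fun k hk => by simp at hk; simp [show 2 * k ≠ n by omega]
  rw [arcIndex, sum_filter, sum_product, sum_congr rfl hfiber]
  obtain ⟨m, rfl | rfl⟩ : ∃ m, n = 2 * m + 1 ∨ n = 2 * m + 2 :=
    ⟨(n - 1) / 2, by have := NeZero.pos n; omega⟩
  · rw [show (2 * m + 1) / 2 = m by omega, show (2 * m + 1 - 1) / 2 = m by omega,
      hsum m (by omega)]
    simp
  · rw [show (2 * m + 2) / 2 = m + 1 by omega, show (2 * m + 2 - 1) / 2 = m by omega,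
      sum_Icc_succ_top (by omega), hsum m (by omega), if_pos (by ring)]
    simp

def arcVertex (x : arcIndex n) : TKVert n :=
  have hx := mem_arcIndex.mp x.2
  ⟨{arc x.1.2 x.1.1, (arc x.1.2 x.1.1)ᶜ}, tkPart_pair_compl ⟨_, self_mem_arc _ hx.1⟩ <| by
    rw [← card_pos, card_compl, card_arc _ (by omega), Fintype.card_fin]; omega⟩

lemma arc_ne_compl_arc {x y : ℕ × Fin n} (hx : x ∈ arcIndex n) (hy : y ∈ arcIndex n) :
    arc x.2 x.1 ≠ (arc y.2 y.1)ᶜ := by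
  rw [mem_arcIndex] at hx hy
  intro h
  have hcard := card_arc x.2 (by omega : x.1 ≤ n)
  rw [h, card_compl, card_arc _ (by omega), Fintype.card_fin] at hcard
  have hx2 : y.2 ∉ arc x.2 x.1 := by simpa [h] using self_mem_arc y.2 hy.1
  have hy2 : x.2 ∉ arc y.2 y.1 := by simpa [← mem_compl, ← h] using self_mem_arc x.2 hx.1
  simp only [mem_arc, Fin.val_sub_eq_ite, Fin.le_iff_val_le_val] at hx2 hy2
  split_ifs at hx2 hy2 <;> omega

lemma arcVertex_injective : Function.Injective (arcVertex (n := n)) := by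
  rintro ⟨x, hx⟩ ⟨y, hy⟩ hxy
  have hparts : ({arc x.2 x.1, (arc x.2 x.1)ᶜ} : Finset _) = {arc y.2 y.1, (arc y.2 y.1)ᶜ} :=
    congrArg Subtype.val hxy
  rcases mem_insert.mp (hparts ▸ mem_insert_self _ _) with h | h
  · have hx' := mem_arcIndex.mp hx
    obtain ⟨hlen, hstart⟩ := arc_eq_arc hx'.1 hx'.2.1 (mem_arcIndex.mp hy).2.1 h
    exact Subtype.ext (Prod.ext hlen hstart)
  · exact absurd (mem_singleton.mp h) (arc_ne_compl_arc hx hy)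

lemma sum_inv_le_one_of_forall_not_adj (t : Finset (arcIndex n))
    (ht : ∀ x ∈ t, ∀ y ∈ t, ¬ (KG n).Adj (arcVertex x) (arcVertex y)) :
    ∑ x ∈ t, (x.1.1 : ℚ)⁻¹ ≤ 1 := by
  suffices ∑ x ∈ t.map (Function.Embedding.subtype _), (x.1 : ℚ)⁻¹ ≤ 1 by simpa using this
  refine IsIntersectingArcAntichain.sum_inv_le_one (fun x hx y hy hxy => ?_) fun x hx => ?_
  · obtain ⟨x, hxt, rfl⟩ := mem_map.mp hx
    obtain ⟨y, hyt, rfl⟩ := mem_map.mp hy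
    have not_nested : ∀ A ∈ (arcVertex x).1, ∀ B ∈ (arcVertex y).1, ¬ A ⊆ B :=
      fun A hA B hB hAB => ht x hxt y hyt
        ⟨arcVertex_injective.ne (Subtype.ext_iff.not.mpr hxy), Or.inl ⟨A, hA, B, hB, hAB⟩⟩
    exact ⟨not_nested _ (mem_insert_self _ _) _ (mem_insert_self _ _), fun hd =>
      not_nested _ (mem_insert_self _ _) _ (mem_insert_of_mem (mem_singleton_self _))
        (subset_compl_iff_disjoint_right.mpr hd)⟩
  · obtain ⟨x, -, rfl⟩ := mem_map.mp hx
    exact (mem_arcIndex.mp x.2).imp_right And.left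

end TotalKneser

/-- `χ(KG(n)) ≥ n·H_{⌊(n-1)/2⌋} + (1 - p(n))`, where `H_m` is the `m`-th harmonic number
and `p(n)` is the residue of `n` mod 2, the chromatic number being read as a real number. -/
theorem chromatic_KG_lower (n : ℕ) (hn : 2 ≤ n) :
    ∃ a : ℕ, (KG n).chromaticNumber = a ∧
      (n : ℝ) * ((harmonic ((n - 1) / 2) : ℚ) : ℝ) + (1 - ((n % 2 : ℕ) : ℝ)) ≤ (a : ℝ) := by
  have : NeZero n := ⟨by omega⟩
  have hfin : (KG n).chromaticNumber ≠ ⊤ :=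
    SimpleGraph.chromaticNumber_ne_top_iff_exists.mpr
      ⟨_, (KG n).colorable_chromaticNumber_of_fintype⟩
  refine ⟨_, (ENat.natCast_toNat hfin).symm, ?_⟩
  obtain ⟨C⟩ := (KG n).colorable_chromaticNumber_of_fintype
  have hbound := C.sum_le_card arcVertex (fun x => (x.1.1 : ℚ)⁻¹) sum_inv_le_one_of_forall_not_adj
  rw [sum_coe_sort (arcIndex n) fun x => (x.1 : ℚ)⁻¹, sum_arcIndex, Fintype.card_fin] at hbound
  exact_mod_cast hbound
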